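/- Let L be a lattice of signature (1,n) and g an element of O^+(L) that is parabolic as an isometry of H^n (fixes no point of H^n and exactly one point of ∂H^n). Then the unique fixed boundary point of g is rational, i.e., it is represented by a nonzero isotropic vector in L ⊗ Q lying in the closure of the positive cone. -/

import Mathlib

open Matrix Filter Topology
open scoped BigOperators

noncomputable section

/-- The standard Minkowski bilinear form of signature `(1,n)` on `ℝ^{n+1}`. -/
def mink (n : ℕ) (v w : Fin (n+1) → ℝ) : ℝ :=
  v 0 * w 0 - ∑ i : Fin n, v i.succ * w i.succ

/-- Real coordinates of an integral vector. -/
def zc (n : ℕ) (v : Fin (n+1) → ℤ) : Fin (n+1) → ℝ := fun i => (v i : ℝ)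

/-- An integral vector is primitive if it is not an integer multiple `k • w`, `k ≥ 2`. -/
def Primitive (n : ℕ) (e : Fin (n+1) → ℤ) : Prop :=
  ¬ ∃ (w : Fin (n+1) → ℤ) (k : ℤ), 2 ≤ k ∧ e = k • w

/-- The hyperboloid model determined by the form `B` and the positive cone `C`. -/
def hyperboloid (n : ℕ) (B : (Fin (n+1) → ℝ) → (Fin (n+1) → ℝ) → ℝ)
    (C : Set (Fin (n+1) → ℝ)) : Set (Fin (n+1) → ℝ) :=
  {x | x ∈ C ∧ B x x = 1}

/-!
After replacing `T` by `-T` if necessary, `B` is the pullback of the Minkowski form under `T`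
and `C` is the preimage of the future light cone `{y | ‖(y₁, …, yₙ)‖ < y₀}`.

If `g u = t • u` with `u` isotropic, then `B u ∘ g = t⁻¹ • B u`, so `g - t⁻¹` is not surjective
and `g` has an eigenvector for `t⁻¹`; it is isotropic when `t ≠ 1`, and normalised into
`closure C` it must be `u` by uniqueness, forcing `t = 1`. As `g` fixes no point of `Hⁿ`, `B` is
negative semidefinite on the fixed space of `g`, so the isotropic fixed vector `u` is
`B`-orthogonal to every fixed vector.

Rationality comes from a `ℚ`-linear retraction `π : ℝ → ℚ`, applied coordinatewise to
`x = u / u j`. Since `g` and the Gram matrix of `B` are integral, `q = π ∘ x` is again fixed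
by `g`, and `B q q = π (B x q) = 0`. Finally two orthogonal isotropic vectors of Minkowski space
are proportional, so `u` is a multiple of `q`, and `q j = 1` makes the factor nonzero.
-/

theorem connectedComponentIn_eq_of_subset_union {X : Type*} [TopologicalSpace X] {F U W : Set X}
    {x : X} (hU : IsOpen U) (hW : IsOpen W) (hUW : Disjoint U W) (hF : F ⊆ U ∪ W) (hUF : U ⊆ F)
    (hUc : IsPreconnected U) (hx : x ∈ U) : connectedComponentIn F x = U :=
  (isPreconnected_connectedComponentIn.subset_left_of_subset_union hU hW hUW
      ((connectedComponentIn_subset F x).trans hF)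
      ⟨x, mem_connectedComponentIn (hUF hx), hx⟩).antisymm
    (hUc.subset_connectedComponentIn hx hUF)

theorem LinearMap.BilinForm.IsSymm.apply_eq_zero_of_nonpos_of_self_eq_zero {V : Type*}
    [AddCommGroup V] [Module ℝ V] {β : LinearMap.BilinForm ℝ V} (hβ : β.IsSymm)
    {W : Submodule ℝ V} (hW : ∀ w ∈ W, β w w ≤ 0) {v w : V} (hv : v ∈ W) (hvv : β v v = 0)
    (hw : w ∈ W) : β v w = 0 := by
  have hquad : ∀ s : ℝ, 0 ≤ -β w w * (s * s) + (-2 * β v w) * s + 0 := fun s => by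
    have := hW (v + s • w) (W.add_mem hv (W.smul_mem s hw))
    simp only [map_add, map_smul, LinearMap.add_apply, LinearMap.smul_apply, smul_eq_mul, hvv,
      hβ.eq w v] at this
    linarith
  have := discrim_le_zero hquad
  rw [discrim] at this
  nlinarith [sq_nonneg (β v w)]

theorem LinearMap.BilinForm.exists_ne_zero_apply_eq_inv_smul {k V : Type*} [Field k]
    [AddCommGroup V] [Module k V] [FiniteDimensional k V] {β : LinearMap.BilinForm k V}
    {f : V →ₗ[k] V} (hf : ∀ v w, β (f v) (f w) = β v w) {u : V} {t : k} (ht : t ≠ 0)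
    (hfu : f u = t • u) (hβu : β u ≠ 0) : ∃ v, v ≠ 0 ∧ f v = t⁻¹ • v := by
  have hrange : ∀ v, β u ((f - t⁻¹ • LinearMap.id (R := k) (M := V)) v) = 0 := fun v => by
    have := hf u v
    rw [hfu, map_smul, LinearMap.smul_apply, smul_eq_mul] at this
    simp only [LinearMap.sub_apply, LinearMap.smul_apply, LinearMap.id_apply, map_sub, map_smul,
      smul_eq_mul, ← this]
    field_simp
    ring
  have hns : ¬ Function.Surjective (f - t⁻¹ • LinearMap.id (R := k) (M := V)) := fun hs =>
    hβu (LinearMap.ext fun w => by obtain ⟨v, rfl⟩ := hs w; exact hrange v)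
  rw [← LinearMap.injective_iff_surjective, injective_iff_map_eq_zero] at hns
  push Not at hns
  obtain ⟨v, hv, hv0⟩ := hns
  exact ⟨v, hv0, by simpa [sub_eq_zero] using hv⟩

theorem LinearMap.BilinForm.exists_int_gram_matrix {R l : Type*} [CommRing R] [Fintype l]
    [DecidableEq l] (β : LinearMap.BilinForm R (l → R))
    (hβ : ∀ i j, ∃ m : ℤ, β (Pi.single i 1) (Pi.single j 1) = m) :
    ∃ G : Matrix l l ℤ, ∀ v w, β v w = v ⬝ᵥ (G.map (Int.cast : ℤ → R) *ᵥ w) := by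
  choose G hG using hβ
  refine ⟨Matrix.of G, fun v w => ?_⟩
  have hmat : LinearMap.toMatrix₂' R β = (Matrix.of G).map Int.cast := by
    ext i j
    simp [LinearMap.toMatrix₂'_apply, hG]
  rw [← Matrix.toLinearMap₂'_apply', ← hmat, Matrix.toLinearMap₂'_toMatrix']

section Rational

variable {l : Type*} [Fintype l]

theorem Matrix.intCast_mulVec_comp {R S F : Type*} [Ring R] [Ring S] [FunLike F R S]
    [AddMonoidHomClass F R S] (φ : F) (M : Matrix l l ℤ) (x : l → R) :
    M.map (Int.cast : ℤ → S) *ᵥ (φ ∘ x) = φ ∘ (M.map (Int.cast : ℤ → R) *ᵥ x) := by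
  ext i
  simp [Matrix.mulVec, dotProduct, map_sum, ← zsmul_eq_mul, map_zsmul]

variable {K L : Type*} [Field K] [Field L] [Algebra K L]

theorem exists_linearMap_leftInverse_algebraMap :
    ∃ π : L →ₗ[K] K, ∀ a, π (algebraMap K L a) = a := by
  obtain ⟨π, hπ⟩ := LinearMap.exists_leftInverse_of_injective (Algebra.linearMap K L)
    (LinearMap.ker_eq_bot.mpr (algebraMap K L).injective)
  exact ⟨π, fun a => LinearMap.congr_fun hπ a⟩

theorem comp_dotProduct_algebraMap_comp (π : L →ₗ[K] K) (x : l → L) (c : l → K) :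
    (π ∘ x) ⬝ᵥ c = π (x ⬝ᵥ (algebraMap K L ∘ c)) := by
  simp only [dotProduct, Function.comp_apply, map_sum, mul_comm (x _), ← Algebra.smul_def,
    map_smul, smul_eq_mul, mul_comm (π _)]

variable (K) in
theorem exists_algebraMap_fixed_isotropic (g G : Matrix l l ℤ) {x : l → L}
    (hx : g.map Int.cast *ᵥ x = x)
    (hxG : ∀ w, g.map Int.cast *ᵥ w = w → x ⬝ᵥ (G.map Int.cast *ᵥ w) = 0) {j : l} (hj : x j = 1) :
    ∃ q : l → K, q j = 1 ∧ g.map Int.cast *ᵥ (algebraMap K L ∘ q) = algebraMap K L ∘ q ∧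
      (algebraMap K L ∘ q) ⬝ᵥ (G.map Int.cast *ᵥ (algebraMap K L ∘ q)) = 0 := by
  obtain ⟨π, hπ⟩ := exists_linearMap_leftInverse_algebraMap (K := K) (L := L)
  have hfix : g.map Int.cast *ᵥ (algebraMap K L ∘ π ∘ x) = algebraMap K L ∘ π ∘ x := by
    rw [Matrix.intCast_mulVec_comp, Matrix.intCast_mulVec_comp, hx]
  refine ⟨π ∘ x, by simpa [hj] using hπ 1, hfix, ?_⟩
  have hGq : G.map Int.cast *ᵥ (algebraMap K L ∘ π ∘ x) =
      algebraMap K L ∘ (G.map Int.cast *ᵥ (π ∘ x)) :=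
    Matrix.intCast_mulVec_comp _ _ _
  have hq : (π ∘ x) ⬝ᵥ (G.map Int.cast *ᵥ (π ∘ x)) = 0 := by
    rw [comp_dotProduct_algebraMap_comp, ← hGq, hxG _ hfix, map_zero]
  rw [hGq, ← RingHom.map_dotProduct, hq, map_zero]

end Rational

def minkForm (n : ℕ) : LinearMap.BilinForm ℝ (Fin (n+1) → ℝ) :=
  LinearMap.mk₂ ℝ (mink n)
    (fun v v' w => by simp only [mink, Pi.add_apply, add_mul, Finset.sum_add_distrib]; ring)
    (fun c v w => by
      simp only [mink, Pi.smul_apply, smul_eq_mul, mul_assoc, ← Finset.mul_sum]; ring)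
    (fun v w w' => by simp only [mink, Pi.add_apply, mul_add, Finset.sum_add_distrib]; ring)
    (fun c v w => by
      simp only [mink, Pi.smul_apply, smul_eq_mul, mul_left_comm _ c, ← Finset.mul_sum]; ring)

section Minkowski

variable {n : ℕ}

@[simp]
theorem minkForm_apply (v w : Fin (n+1) → ℝ) : minkForm n v w = mink n v w := rfl

theorem mink_comm (v w : Fin (n+1) → ℝ) : mink n v w = mink n w v := by
  simp only [mink, mul_comm]

theorem mink_single_zero (y : Fin (n+1) → ℝ) : mink n y (Pi.single 0 1) = y 0 := by
  simp [mink, Fin.succ_ne_zero]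

variable (n) in
def spatial : (Fin (n+1) → ℝ) →L[ℝ] EuclideanSpace ℝ (Fin n) :=
  (EuclideanSpace.equiv (Fin n) ℝ).symm.toContinuousLinearMap ∘L
    ContinuousLinearMap.pi fun i => ContinuousLinearMap.proj i.succ

@[simp]
theorem spatial_apply (y : Fin (n+1) → ℝ) (i : Fin n) : spatial n y i = y i.succ := rfl

theorem mink_self (y : Fin (n+1) → ℝ) : mink n y y = y 0 ^ 2 - ‖spatial n y‖ ^ 2 := by
  rw [mink, EuclideanSpace.norm_sq_eq]
  simp [sq]

theorem eq_zero_of_mink_self_eq_zero {y : Fin (n+1) → ℝ} (hy : mink n y y = 0) (h0 : y 0 = 0) :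
    y = 0 := by
  rw [mink_self, h0] at hy
  have hs : spatial n y = 0 := norm_eq_zero.mp (by nlinarith [norm_nonneg (spatial n y)])
  funext i
  exact Fin.cases h0 (fun k => by simpa using congr($hs k)) i

theorem exists_eq_smul_of_mink_eq_zero {x y : Fin (n+1) → ℝ} (hx : mink n x x = 0)
    (hy : mink n y y = 0) (hxy : mink n x y = 0) (hx0 : x ≠ 0) : ∃ r : ℝ, y = r • x := by
  have hx0' : x 0 ≠ 0 := fun h => hx0 (eq_zero_of_mink_self_eq_zero hx h)
  refine ⟨y 0 / x 0, sub_eq_zero.mp (eq_zero_of_mink_self_eq_zero ?_ ?_)⟩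
  · simp only [← minkForm_apply, map_sub, map_smul, LinearMap.sub_apply, LinearMap.smul_apply,
      smul_eq_mul] at hx hy hxy ⊢
    rw [minkForm_apply y x, mink_comm, ← minkForm_apply, hx, hy, hxy]
    ring
  · simp [hx0']

variable (n) in
def futureCone : Set (Fin (n+1) → ℝ) := {y | ‖spatial n y‖ < y 0}

theorem isOpen_futureCone : IsOpen (futureCone n) := isOpen_lt (by fun_prop) (by fun_prop)

theorem convex_futureCone : Convex ℝ (futureCone n) := by
  have h := ((convexOn_norm convex_univ).comp_linearMap (spatial n).toLinearMap).sub
    ((LinearMap.proj (R := ℝ) (φ := fun _ : Fin (n+1) => ℝ) 0).concaveOn convex_univ)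
  simpa [futureCone, sub_neg] using h.convex_lt 0

theorem mink_pos_iff {y : Fin (n+1) → ℝ} :
    0 < mink n y y ↔ y ∈ futureCone n ∨ -y ∈ futureCone n := by
  rw [mink_self, sub_pos, sq_lt_sq, abs_norm, lt_abs]
  simp [futureCone]

theorem disjoint_futureCone_neg : Disjoint (futureCone n) (-futureCone n) := by
  refine Set.disjoint_left.mpr fun y h1 h2 => ?_
  simp only [futureCone, Set.mem_neg, Set.mem_ofPred_eq, map_neg, norm_neg, Pi.neg_apply] at h1 h2
  linarith [norm_nonneg (spatial n y)]

theorem closure_futureCone : closure (futureCone n) = {y | ‖spatial n y‖ ≤ y 0} := by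
  refine (closure_lt_subset_le (by fun_prop) (by fun_prop)).antisymm fun y hy => ?_
  have hlim : Tendsto (fun ε : ℝ => y + ε • Pi.single 0 1) (𝓝[>] 0) (𝓝 y) := by
    have hc : Continuous fun ε : ℝ => y + ε • (Pi.single 0 1 : Fin (n+1) → ℝ) := by fun_prop
    simpa using (hc.tendsto 0).mono_left nhdsWithin_le_nhds
  refine mem_closure_of_tendsto hlim (eventually_nhdsWithin_of_forall fun ε (hε : 0 < ε) => ?_)
  have hs : spatial n (Pi.single 0 1) = 0 := by ext i; simp [Fin.succ_ne_zero]
  simp only [Set.mem_ofPred_eq, map_add, map_smul, hs, smul_zero, add_zero,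
    Pi.add_apply, Pi.smul_apply, Pi.single_eq_same, smul_eq_mul, mul_one]
  exact lt_add_of_le_of_pos hy hε

theorem mem_closure_futureCone_or_neg_of_mink_self_eq_zero {y : Fin (n+1) → ℝ}
    (hy : mink n y y = 0) : y ∈ closure (futureCone n) ∨ -y ∈ closure (futureCone n) := by
  rw [mink_self, sub_eq_zero, sq_eq_sq_iff_abs_eq_abs, abs_norm] at hy
  simpa [closure_futureCone, ← hy] using le_abs.mp le_rfl

theorem smul_mem_closure_futureCone {c : ℝ} (hc : 0 ≤ c) {y : Fin (n+1) → ℝ}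
    (hy : y ∈ closure (futureCone n)) : c • y ∈ closure (futureCone n) := by
  simp only [closure_futureCone, Set.mem_ofPred_eq, map_smul, norm_smul, Real.norm_of_nonneg hc,
    Pi.smul_apply, smul_eq_mul] at hy ⊢
  exact mul_le_mul_of_nonneg_left hy hc

end Minkowski

section Pullback

variable {V : Type*} [AddCommGroup V] [Module ℝ V] {n : ℕ} (T : V ≃ₗ[ℝ] (Fin (n+1) → ℝ))

def minkPullback : LinearMap.BilinForm ℝ V := (minkForm n).compl₁₂ (T : V →ₗ[ℝ] _) T

@[simp]
theorem minkPullback_apply (v w : V) : minkPullback T v w = mink n (T v) (T w) := rfl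

theorem isSymm_minkPullback : (minkPullback T).IsSymm :=
  LinearMap.BilinForm.isSymm_def.mpr fun v w => mink_comm (T v) (T w)

theorem minkPullback_ne_zero {v : V} (hv : v ≠ 0) : minkPullback T v ≠ 0 := by
  intro h
  have hvv : mink n (T v) (T v) = 0 := LinearMap.congr_fun h v
  have hv0 : T v 0 = 0 := by
    simpa [mink_single_zero] using LinearMap.congr_fun h (T.symm (Pi.single 0 1))
  exact hv (T.map_eq_zero_iff.mp (eq_zero_of_mink_self_eq_zero hvv hv0))

theorem exists_eq_smul_of_minkPullback_eq_zero {x y : V} (hx : minkPullback T x x = 0)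
    (hy : minkPullback T y y = 0) (hxy : minkPullback T x y = 0) (hx0 : x ≠ 0) :
    ∃ r : ℝ, y = r • x := by
  obtain ⟨r, hr⟩ := exists_eq_smul_of_mink_eq_zero hx hy hxy (T.map_ne_zero_iff.mpr hx0)
  exact ⟨r, T.injective (by rw [map_smul]; exact hr)⟩

theorem exists_apply_mem_futureCone {v₀ : V} (h : 0 < minkPullback T v₀ v₀) :
    ∃ T' : V ≃ₗ[ℝ] (Fin (n+1) → ℝ), minkPullback T' = minkPullback T ∧ T' v₀ ∈ futureCone n := by
  rcases mink_pos_iff.mp h with h | h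
  · exact ⟨T, rfl, h⟩
  · refine ⟨T.trans (LinearEquiv.neg ℝ), ?_, h⟩
    ext v w
    simp [← minkForm_apply]

theorem minkPullback_self_nonpos_of_apply_eq_self (f : V →ₗ[ℝ] V)
    (hnofix : ∀ x ∈ T ⁻¹' futureCone n, minkPullback T x x = 1 → f x ≠ x) {w : V}
    (hw : f w = w) : minkPullback T w w ≤ 0 := by
  by_contra! hpos
  have hfix : ∀ a : ℝ, f (a • w) = a • w := fun a => by rw [map_smul, hw]
  have hone : ∀ a : ℝ, a ^ 2 = (minkPullback T w w)⁻¹ → minkPullback T (a • w) (a • w) = 1 :=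
    fun a ha => by
      simp only [map_smul, LinearMap.smul_apply, smul_eq_mul, ← mul_assoc, ← sq, ha]
      exact inv_mul_cancel₀ hpos.ne'
  set c := (√(minkPullback T w w))⁻¹
  have hc : c ^ 2 = (minkPullback T w w)⁻¹ := by rw [inv_pow, Real.sq_sqrt hpos.le]
  rcases mink_pos_iff.mp (hone c hc ▸ one_pos : 0 < minkPullback T (c • w) (c • w)) with h | h
  · exact hnofix _ h (hone c hc) (hfix c)
  · rw [← map_neg, ← neg_smul] at h
    exact hnofix _ h (hone (-c) (by rwa [neg_sq])) (hfix (-c))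

end Pullback

section Cone

variable {V : Type*} [NormedAddCommGroup V] [NormedSpace ℝ V] [FiniteDimensional ℝ V] {n : ℕ}
  (T : V ≃ₗ[ℝ] (Fin (n+1) → ℝ))

theorem connectedComponentIn_eq_preimage_futureCone {v₀ : V} (h : T v₀ ∈ futureCone n) :
    connectedComponentIn {v | 0 < minkPullback T v v} v₀ = T ⁻¹' futureCone n := by
  have hT : Continuous T := T.toContinuousLinearEquiv.continuous
  have hsub : {v | 0 < minkPullback T v v} ⊆ T ⁻¹' futureCone n ∪ T ⁻¹' (-futureCone n) :=
    fun v hv => mink_pos_iff.mp hv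
  have hconv : Convex ℝ (T ⁻¹' futureCone n) :=
    convex_futureCone.linear_preimage (T : V →ₗ[ℝ] (Fin (n+1) → ℝ))
  exact connectedComponentIn_eq_of_subset_union (isOpen_futureCone.preimage hT)
    (isOpen_futureCone.neg.preimage hT) (disjoint_futureCone_neg.preimage T) hsub
    (fun v hv => mink_pos_iff.mpr (Or.inl hv)) hconv.isPreconnected h

theorem closure_preimage_futureCone :
    closure (T ⁻¹' futureCone n) = T ⁻¹' closure (futureCone n) :=
  (T.toContinuousLinearEquiv.toHomeomorph.preimage_closure _).symm

theorem exists_smul_mem_closure_of_minkPullback_eq_zero {v : V} (hv : v ≠ 0)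
    (hvv : minkPullback T v v = 0) :
    ∃ c : ℝ, c • v ∈ closure (T ⁻¹' futureCone n) ∧ ‖c • v‖ = 1 := by
  have hnorm : ∀ c : ℝ, |c| = ‖v‖⁻¹ → ‖c • v‖ = 1 := fun c hc => by
    rw [norm_smul, Real.norm_eq_abs, hc, inv_mul_cancel₀ (norm_ne_zero_iff.mpr hv)]
  rw [closure_preimage_futureCone]
  rcases mem_closure_futureCone_or_neg_of_mink_self_eq_zero hvv with h | h
  · refine ⟨‖v‖⁻¹, ?_, hnorm _ (by simp)⟩
    simpa using smul_mem_closure_futureCone (c := ‖v‖⁻¹) (by positivity) h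
  · refine ⟨-‖v‖⁻¹, ?_, hnorm _ (by simp)⟩
    simpa using smul_mem_closure_futureCone (c := ‖v‖⁻¹) (by positivity) h

theorem eigenvalue_eq_one_of_existsUnique (f : V →ₗ[ℝ] V)
    (hf : ∀ v w, minkPullback T (f v) (f w) = minkPullback T v w)
    (huniq : ∃! u, u ∈ closure (T ⁻¹' futureCone n) ∧ ‖u‖ = 1 ∧ minkPullback T u u = 0 ∧
      ∃ t : ℝ, 0 < t ∧ f u = t • u)
    {u : V} (huK : u ∈ closure (T ⁻¹' futureCone n)) (hu1 : ‖u‖ = 1)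
    (huu : minkPullback T u u = 0) {t : ℝ} (ht : 0 < t) (hfu : f u = t • u) : t = 1 := by
  have hu0 : u ≠ 0 := by rintro rfl; simp at hu1
  obtain ⟨v, hv0, hfv⟩ := LinearMap.BilinForm.exists_ne_zero_apply_eq_inv_smul hf ht.ne' hfu
    (minkPullback_ne_zero T hu0)
  by_contra ht1
  have hsq : t⁻¹ * t⁻¹ ≠ 1 := fun h => ht1 <| by
    rcases mul_self_eq_one_iff.mp h with h | h
    · exact inv_eq_one.mp h
    · linarith [inv_pos.mpr ht]
  have hvv : minkPullback T v v = 0 := by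
    have h := hf v v
    simp only [hfv, map_smul, LinearMap.smul_apply, smul_eq_mul, ← mul_assoc] at h
    by_contra hvv
    exact hsq ((mul_eq_right₀ hvv).mp h)
  obtain ⟨c, hcK, hc1⟩ := exists_smul_mem_closure_of_minkPullback_eq_zero T hv0 hvv
  have hfcv : f (c • v) = t⁻¹ • c • v := by rw [map_smul, hfv, smul_comm]
  have huv : u = c • v := huniq.unique ⟨huK, hu1, huu, t, ht, hfu⟩
    ⟨hcK, hc1, by simp [hvv], t⁻¹, inv_pos.mpr ht, hfcv⟩
  rw [← huv, hfu] at hfcv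
  have htt : t = t⁻¹ := smul_left_injective ℝ hu0 hfcv
  exact hsq (by nth_rw 2 [← htt]; exact inv_mul_cancel₀ ht.ne')

end Cone

theorem exists_pos_smul_ratCast_eq {l : Type*} [Fintype l] {n : ℕ}
    (T : (l → ℝ) ≃ₗ[ℝ] (Fin (n+1) → ℝ)) (g G : Matrix l l ℤ)
    (hG : ∀ v w, minkPullback T v w = v ⬝ᵥ (G.map Int.cast *ᵥ w))
    (hW : ∀ w, g.map Int.cast *ᵥ w = w → minkPullback T w w ≤ 0) {u : l → ℝ} (hu0 : u ≠ 0)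
    (huu : minkPullback T u u = 0) (hu : g.map Int.cast *ᵥ u = u) :
    ∃ (q : l → ℚ) (s : ℝ), 0 < s ∧ u = s • (fun i => (q i : ℝ)) := by
  let W := LinearMap.ker ((g.map (Int.cast : ℤ → ℝ)).mulVecLin - LinearMap.id)
  have hmem : ∀ w, w ∈ W ↔ g.map Int.cast *ᵥ w = w := fun w => by simp [W, sub_eq_zero]
  have hperp : ∀ w, g.map Int.cast *ᵥ w = w → minkPullback T u w = 0 := fun w hw =>
    (isSymm_minkPullback T).apply_eq_zero_of_nonpos_of_self_eq_zero
      (fun w hw => hW w ((hmem w).mp hw)) ((hmem u).mpr hu) huu ((hmem w).mpr hw)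
  obtain ⟨j, hj⟩ := Function.ne_iff.mp hu0
  obtain ⟨q, hqj, hqfix, hqq⟩ := exists_algebraMap_fixed_isotropic ℚ g G (x := (u j)⁻¹ • u)
    (by rw [mulVec_smul, hu]) (fun w hw => by rw [smul_dotProduct, ← hG, hperp w hw, smul_zero])
    (inv_mul_cancel₀ hj)
  obtain ⟨r, hr⟩ := exists_eq_smul_of_minkPullback_eq_zero T huu (by rwa [hG]) (hperp _ hqfix) hu0
  have hrj : r * u j = 1 := by simpa [hqj] using (congrFun hr j).symm
  have hu_eq : u = u j • (fun i => (q i : ℝ)) := by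
    rw [show (fun i => (q i : ℝ)) = algebraMap ℚ ℝ ∘ q by ext; simp, hr, smul_smul, mul_comm, hrj,
      one_smul]
  rcases hj.lt_or_gt with hneg | hpos
  · exact ⟨-q, -u j, neg_pos.mpr hneg, hu_eq.trans (by ext; simp)⟩
  · exact ⟨q, u j, hpos, hu_eq⟩

theorem stmt11_general (n : ℕ)
    (B : (Fin (n+1) → ℝ) → (Fin (n+1) → ℝ) → ℝ)
    (hsig : ∃ T : (Fin (n+1) → ℝ) ≃ₗ[ℝ] (Fin (n+1) → ℝ),
      ∀ v w, B v w = mink n (T v) (T w))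
    (hInt : ∀ v w : Fin (n+1) → ℤ, ∃ m : ℤ, B (zc n v) (zc n w) = (m : ℝ))
    (C : Set (Fin (n+1) → ℝ))
    (hC : ∃ v₀, 0 < B v₀ v₀ ∧ C = connectedComponentIn {v | 0 < B v v} v₀)
    (g : Matrix (Fin (n+1)) (Fin (n+1)) ℤ)
    (hgB : ∀ v w, B ((g.map (Int.cast : ℤ → ℝ)).mulVec v)
        ((g.map (Int.cast : ℤ → ℝ)).mulVec w) = B v w)
    (hnofix : ∀ x ∈ hyperboloid n B C, (g.map (Int.cast : ℤ → ℝ)).mulVec x ≠ x)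
    (huniq : ∃! u, u ∈ closure C ∧ ‖u‖ = 1 ∧ B u u = 0 ∧
      ∃ t : ℝ, 0 < t ∧ (g.map (Int.cast : ℤ → ℝ)).mulVec u = t • u) :
    ∀ u, (u ∈ closure C ∧ ‖u‖ = 1 ∧ B u u = 0 ∧
        ∃ t : ℝ, 0 < t ∧ (g.map (Int.cast : ℤ → ℝ)).mulVec u = t • u) →
      ∃ (q : Fin (n+1) → ℚ) (s : ℝ), 0 < s ∧ u = s • (fun i => (q i : ℝ)) := by
  rintro u ⟨huK, hu1, huu, t, ht, hgu⟩
  obtain ⟨T₀, hT₀⟩ := hsig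
  obtain ⟨v₀, hv₀, rfl⟩ := hC
  obtain ⟨T, hT, hv₀T⟩ := exists_apply_mem_futureCone T₀ (v₀ := v₀) (by rwa [hT₀] at hv₀)
  obtain rfl : B = fun v w => minkPullback T v w := by
    ext v w; rw [hT, minkPullback_apply, hT₀]
  beta_reduce at *
  rw [connectedComponentIn_eq_preimage_futureCone T hv₀T] at huK hnofix huniq
  have hu0 : u ≠ 0 := by rintro rfl; simp at hu1
  obtain rfl :=
    eigenvalue_eq_one_of_existsUnique T (g.map Int.cast).mulVecLin hgB huniq huK hu1 huu ht hgu
  have hzc : ∀ i, zc n (Pi.single i 1) = Pi.single i 1 := fun i => by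
    ext k; by_cases hk : k = i <;> simp [zc, hk]
  obtain ⟨G, hG⟩ := (minkPullback T).exists_int_gram_matrix fun i j => by
    simpa [hzc] using hInt (Pi.single i 1) (Pi.single j 1)
  exact exists_pos_smul_ratCast_eq T g G hG
    (fun w hw => minkPullback_self_nonpos_of_apply_eq_self T (g.map Int.cast).mulVecLin
      (fun x hx h1 => hnofix x ⟨hx, h1⟩) hw) hu0 huu (by simpa using hgu)

/-- a parabolic element `g` of `O⁺(L)` (no fixed point on `Hⁿ`, a unique
fixed boundary ray) has a rational fixed boundary point: every fixed boundary ray is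
spanned by a vector with rational coordinates. -/
theorem stmt11 (n : ℕ)
    (B : (Fin (n+1) → ℝ) → (Fin (n+1) → ℝ) → ℝ)
    (hsig : ∃ T : (Fin (n+1) → ℝ) ≃ₗ[ℝ] (Fin (n+1) → ℝ),
      ∀ v w, B v w = mink n (T v) (T w))
    (hInt : ∀ v w : Fin (n+1) → ℤ, ∃ m : ℤ, B (zc n v) (zc n w) = (m : ℝ))
    (C : Set (Fin (n+1) → ℝ))
    (hC : ∃ v₀, 0 < B v₀ v₀ ∧ C = connectedComponentIn {v | 0 < B v v} v₀)
    (g : Matrix (Fin (n+1)) (Fin (n+1)) ℤ) (hdet : IsUnit g.det)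
    (hgB : ∀ v w, B ((g.map (Int.cast : ℤ → ℝ)).mulVec v)
        ((g.map (Int.cast : ℤ → ℝ)).mulVec w) = B v w)
    (hgC : ∀ v ∈ C, (g.map (Int.cast : ℤ → ℝ)).mulVec v ∈ C)
    (hnofix : ∀ x ∈ hyperboloid n B C, (g.map (Int.cast : ℤ → ℝ)).mulVec x ≠ x)
    (huniq : ∃! u, u ∈ closure C ∧ ‖u‖ = 1 ∧ B u u = 0 ∧
      ∃ t : ℝ, 0 < t ∧ (g.map (Int.cast : ℤ → ℝ)).mulVec u = t • u) :
    ∀ u, (u ∈ closure C ∧ ‖u‖ = 1 ∧ B u u = 0 ∧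
        ∃ t : ℝ, 0 < t ∧ (g.map (Int.cast : ℤ → ℝ)).mulVec u = t • u) →
      ∃ (q : Fin (n+1) → ℚ) (s : ℝ), 0 < s ∧ u = s • (fun i => (q i : ℝ)) :=
  stmt11_general n B hsig hInt C hC g hgB hnofix huniq
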